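/- arXiv:2305.05444 — 2 statements merged into one kernel-verified Lean document; each statement's English description precedes it below -/
import Mathlib

section
/- Let I₁, I₂ ⊆ ℝ be nonempty open intervals, D := (1/2)(I₁ + I₂), and H ⊆ D a nonempty subinterval. For i ≠ j in {1,2}, if inf((Iᵢ | H)_{I_j}) belongs to I_j (i.e., the infimum is attained strictly inside I_j), then sup((I_j | H)_{Iᵢ}) = sup Iᵢ (in the extended reals). -/
/-- For `P, Q, S ⊆ ℝ`, the reflection set `(S | P)_Q := (2P - S) ∩ Q`. -/
def reflSet (S P Q : Set ℝ) : Set ℝ :=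
  {x | ∃ p ∈ P, ∃ s ∈ S, x = 2 * p - s} ∩ Q

/-- The set `(1/2)(A + B) = {(a+b)/2 : a ∈ A, b ∈ B}`. -/
def halfSum (A B : Set ℝ) : Set ℝ := {u | ∃ a ∈ A, ∃ b ∈ B, u = (a + b) / 2}

/-- The infimum of a set of reals, taken in the extended reals. -/
noncomputable def eInf (A : Set ℝ) : EReal := sInf ((fun x : ℝ => (x : EReal)) '' A)

/-- The supremum of a set of reals, taken in the extended reals. -/
noncomputable def eSup (A : Set ℝ) : EReal := sSup ((fun x : ℝ => (x : EReal)) '' A)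

theorem reflSet_inf_mem_imp_sup_eq (I₁ I₂ H : Set ℝ)
    (hI₁o : IsOpen I₁) (hI₁c : I₁.OrdConnected) (hI₁n : I₁.Nonempty)
    (hI₂o : IsOpen I₂) (hI₂c : I₂.OrdConnected) (hI₂n : I₂.Nonempty)
    (hH : H ⊆ halfSum I₁ I₂) (hHn : H.Nonempty) (hHc : H.OrdConnected)
    (hinf : eInf (reflSet I₁ H I₂) ∈ (fun x : ℝ => (x : EReal)) '' I₂) :
    eSup (reflSet I₂ H I₁) = eSup I₁ := by
  obtain ⟨m, hmI₂, hm⟩ := hinf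
  -- m is a lower bound of S₂ := reflSet I₁ H I₂
  have hlb : ∀ t ∈ reflSet I₁ H I₂, m ≤ t := by
    intro t ht
    have h1 : eInf (reflSet I₁ H I₂) ≤ (t : EReal) := sInf_le ⟨t, ht, rfl⟩
    rw [← hm] at h1
    simp only at h1
    exact_mod_cast h1
  -- find m' ∈ I₂ with m' < m
  obtain ⟨ε, hε, hball⟩ := Metric.isOpen_iff.mp hI₂o m hmI₂
  have hm'I₂ : m - ε / 2 ∈ I₂ := by
    apply hball
    rw [Metric.mem_ball, Real.dist_eq, show m - ε / 2 - m = -(ε / 2) by ring, abs_neg,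
      abs_of_pos (by linarith)]
    linarith
  set m' := m - ε / 2 with hm'def
  have hm'lt : m' < m := by rw [hm'def]; linarith
  -- a witness from H
  obtain ⟨h₀, hh₀⟩ := hHn
  obtain ⟨a₀, ha₀, b, hbI₂, hab⟩ := hH hh₀
  have hb2 : b = 2 * h₀ - a₀ := by rw [hab]; ring
  have hbS₂ : b ∈ reflSet I₁ H I₂ := ⟨⟨h₀, hh₀, a₀, ha₀, hb2⟩, hbI₂⟩
  have hmb : m ≤ b := hlb b hbS₂
  -- key: every a ∈ I₁ with a₀ ≤ a belongs to reflSet I₂ H I₁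
  have key : ∀ a ∈ I₁, a₀ ≤ a → a ∈ reflSet I₂ H I₁ := by
    intro a haI₁ ha₀a
    set t := 2 * h₀ - a with htdef
    by_cases hcase : m' ≤ t
    · have htb : t ≤ b := by rw [hb2, htdef]; linarith
      have htI₂ : t ∈ I₂ := hI₂c.out hm'I₂ hbI₂ ⟨hcase, htb⟩
      exact ⟨⟨h₀, hh₀, t, htI₂, by rw [htdef]; ring⟩, haI₁⟩
    · exfalso
      push_neg at hcase
      set u := (m' + m) / 2 with hudef
      have hu1 : m' < u := by rw [hudef]; linarith
      have hu2 : u < m := by rw [hudef]; linarith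
      have huI₂ : u ∈ I₂ := hI₂c.out hm'I₂ hmI₂ ⟨le_of_lt hu1, le_of_lt hu2⟩
      set a' := 2 * h₀ - u with ha'def
      have ha'1 : a₀ ≤ a' := by rw [ha'def, hb2] at *; linarith
      have ha'2 : a' ≤ a := by rw [ha'def]; rw [htdef] at hcase; linarith
      have ha'I₁ : a' ∈ I₁ := hI₁c.out ha₀ haI₁ ⟨ha'1, ha'2⟩
      have huS₂ : u ∈ reflSet I₁ H I₂ :=
        ⟨⟨h₀, hh₀, a', ha'I₁, by rw [ha'def]; ring⟩, huI₂⟩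
      exact absurd (hlb u huS₂) (not_le.mpr hu2)
  -- conclude
  apply le_antisymm
  · apply sSup_le_sSup
    exact Set.image_mono (Set.inter_subset_right)
  · apply sSup_le
    rintro x ⟨y, hyI₁, rfl⟩
    have hz : max y a₀ ∈ reflSet I₂ H I₁ := by
      rcases le_total y a₀ with h | h
      · rw [max_eq_right h]; exact key a₀ ha₀ le_rfl
      · rw [max_eq_left h]; exact key y hyI₁ h
    calc ((y : ℝ) : EReal) ≤ ((max y a₀ : ℝ) : EReal) := by
          exact_mod_cast le_max_left y a₀
      _ ≤ eSup (reflSet I₂ H I₁) := le_sSup ⟨max y a₀, hz, rfl⟩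
end

section
/- Let I₁, I₂ ⊆ ℝ be nonempty open intervals, D := (1/2)(I₁ + I₂), H ⊆ D a nonempty subinterval, and i ≠ j in {1,2}. If sup((Iᵢ | H)_{I_j}) ∈ I_j, then inf((I_j | H)_{Iᵢ}) = inf Iᵢ (in the extended reals). -/
theorem reflSet_sup_mem_imp_inf_eq (I₁ I₂ H : Set ℝ)
    (hI₁o : IsOpen I₁) (hI₁c : I₁.OrdConnected) (hI₁n : I₁.Nonempty)
    (hI₂o : IsOpen I₂) (hI₂c : I₂.OrdConnected) (hI₂n : I₂.Nonempty)
    (hH : H ⊆ halfSum I₁ I₂) (hHn : H.Nonempty) (hHc : H.OrdConnected)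
    (hsup : eSup (reflSet I₁ H I₂) ∈ (fun x : ℝ => (x : EReal)) '' I₂) :
    eInf (reflSet I₂ H I₁) = eInf I₁ := by
  obtain ⟨m, hmI₂, hm⟩ := hsup
  have hmeq : (m : EReal) = eSup (reflSet I₁ H I₂) := hm
  -- every element of B := reflSet I₁ H I₂ is ≤ m
  have hub : ∀ b ∈ reflSet I₁ H I₂, b ≤ m := by
    intro b hb
    have h1 : (b : EReal) ≤ (m : EReal) := by
      rw [hmeq]
      exact le_sSup ⟨b, hb, rfl⟩
    exact_mod_cast h1
  -- B is nonempty
  have hBne : (reflSet I₁ H I₂).Nonempty := by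
    rcases Set.eq_empty_or_nonempty (reflSet I₁ H I₂) with he | hne
    · exfalso
      rw [he] at hmeq
      simp [eSup] at hmeq
    · exact hne
  obtain ⟨b, hb⟩ := hBne
  obtain ⟨⟨hb0, hhb, xb, hxb, hbx⟩, hbI₂'⟩ := hb
  -- hb0 ∈ H, xb ∈ I₁, b = 2*hb0 - xb, b ∈ I₂
  have hbm : b ≤ m := hub b ⟨⟨hb0, hhb, xb, hxb, hbx⟩, hbI₂'⟩
  -- key claim : ∀ h ∈ H, ∀ x ∈ I₁, 2*h - x ≤ m
  have key : ∀ h ∈ H, ∀ x ∈ I₁, 2 * h - x ≤ m := by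
    intro h hh x hx
    by_contra hlt
    push_neg at hlt  -- m < 2*h - x
    -- choose m' ∈ I₂ with m < m' < 2*h - x
    obtain ⟨m', hm'I₂, hmm', hm'lt⟩ : ∃ m' ∈ I₂, m < m' ∧ m' < 2 * h - x := by
      obtain ⟨ε, hε, hball⟩ := Metric.isOpen_iff.mp hI₂o m hmI₂
      have hle1 : min ε (2 * h - x - m) ≤ ε := min_le_left _ _
      have hle2 : min ε (2 * h - x - m) ≤ 2 * h - x - m := min_le_right _ _
      have hmin : 0 < min ε (2 * h - x - m) := lt_min hε (by linarith)
      refine ⟨m + min ε (2 * h - x - m) / 2, ?_, by linarith, by linarith⟩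
      apply hball
      rw [Metric.mem_ball, Real.dist_eq, abs_lt]
      constructor <;> linarith
    -- now produce m' ∈ B, contradiction with m < m' ≤ m
    by_cases hc : hb0 ≤ (x + m') / 2
    · -- (x+m')/2 ∈ H between hb0 and h
      have hmem : (x + m') / 2 ∈ H := by
        apply hHc.out hhb hh
        exact ⟨hc, by linarith⟩
      have hmB : m' ∈ reflSet I₁ H I₂ :=
        ⟨⟨(x + m') / 2, hmem, x, hx, by ring⟩, hm'I₂⟩
      have := hub m' hmB
      linarith
    · push_neg at hc  -- (x+m')/2 < hb0
      have hx''I₁ : 2 * hb0 - m' ∈ I₁ := by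
        apply hI₁c.out hx hxb
        exact ⟨by linarith, by linarith⟩
      have hmB : m' ∈ reflSet I₁ H I₂ :=
        ⟨⟨hb0, hhb, 2 * hb0 - m', hx''I₁, by ring⟩, hm'I₂⟩
      have := hub m' hmB
      linarith
  -- main : for every x ∈ I₁ there is a ∈ A with a ≤ x
  have main : ∀ x ∈ I₁, ∃ a ∈ reflSet I₂ H I₁, a ≤ x := by
    intro x hx
    by_cases hcx : xb ≤ x
    · exact ⟨xb, ⟨⟨hb0, hhb, b, hbI₂', by linarith⟩, hxb⟩, hcx⟩
    · push_neg at hcx  -- x < xb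
      have hyI₂ : 2 * hb0 - x ∈ I₂ := by
        apply hI₂c.out hbI₂' hmI₂
        exact ⟨by linarith, key hb0 hhb x hx⟩
      exact ⟨x, ⟨⟨hb0, hhb, 2 * hb0 - x, hyI₂, by ring⟩, hx⟩, le_refl x⟩
  -- conclude
  apply le_antisymm
  · -- eInf A ≤ eInf I₁
    apply le_sInf
    rintro z ⟨x, hx, rfl⟩
    obtain ⟨a, haA, hax⟩ := main x hx
    calc sInf ((fun x : ℝ => (x : EReal)) '' reflSet I₂ H I₁) ≤ (a : EReal) :=
          sInf_le ⟨a, haA, rfl⟩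
      _ ≤ (x : EReal) := EReal.coe_le_coe_iff.mpr hax
  · -- eInf I₁ ≤ eInf A since A ⊆ I₁
    apply sInf_le_sInf
    exact Set.image_mono Set.inter_subset_right
end
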